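/- arXiv:1505.07753 — 2 statements merged into one kernel-verified Lean document; each statement's English description precedes it below -/
import Mathlib

section
/- Let φ ∈ K(z) be a rational function of degree d that is not isotrivial over K. Then the set of pairs (λ₁, λ₂) ∈ k² such that φ(λ₁) = λ₂ is finite, of cardinality at most 2d. -/
open Polynomial

noncomputable section

open scoped Classical

/-- The places of the rational function field `k(t)`: the finite place attached to `t - α`
for `α ∈ k`, together with the place at infinity. -/
inductive Place (k : Type*) : Type _ where
  | finite (α : k) : Place k
  | infinity : Place k

variable {k : Type*} [Field k]

/-- The normalized additive valuation `v_p : k(t) → ℤ` attached to a place `p`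
(with junk value `0` at `x = 0`). -/
def placeVal : Place k → RatFunc k → ℤ
  | Place.finite α, x =>
      (Polynomial.rootMultiplicity α (RatFunc.num x) : ℤ)
        - (Polynomial.rootMultiplicity α (RatFunc.denom x) : ℤ)
  | Place.infinity, x => - RatFunc.intDegree x

/-- The valuation with value `⊤` at `0`. -/
def placeValT (p : Place k) (x : RatFunc k) : WithTop ℤ :=
  if x = 0 then ⊤ else (placeVal p x : WithTop ℤ)

/-- The ring of S-integers `R_S`. -/
def SInt (S : Finset (Place k)) : Set (RatFunc k) :=
  {x | ∀ p ∉ S, 0 ≤ placeValT p x}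

/-- The group of S-units `R_S*`. -/
def SUnit (S : Finset (Place k)) : Set (RatFunc k) :=
  {x | ∀ p ∉ S, placeValT p x = 0}

/-- Canonical homogeneous coordinates on `P^1(F) = F ∪ {∞}`. -/
def coords {F : Type*} [Field F] : Option F → F × F
  | none => (1, 0)
  | some x => (x, 1)

/-- The `p`-adic logarithmic distance between two points of `P^1(k(t))`. -/
def logDist (p : Place k) (P Q : Option (RatFunc k)) : WithTop ℤ :=
  placeValT p ((coords P).1 * (coords Q).2 - (coords Q).1 * (coords P).2)
    + (((- min (placeVal p (coords P).1) (placeVal p (coords P).2))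
        - min (placeVal p (coords Q).1) (placeVal p (coords Q).2) : ℤ) : WithTop ℤ)

/-- The self-map of `P^1(F) = F ∪ {∞}` induced by the rational function `f/g` of degree `d`;
in homogeneous coordinates `[x : y]` is sent to `[F*(x,y) : G*(x,y)]` where `F*`, `G*` are the
degree-`d` homogenizations of `f` and `g`. -/
def ratApply {F : Type*} [Field F] (f g : Polynomial F) (d : ℕ) :
    Option F → Option F
  | none =>
      if Polynomial.coeff g d = 0 then none
      else some (Polynomial.coeff f d / Polynomial.coeff g d)
  | some x =>
      if Polynomial.eval x g = 0 then none
      else some (Polynomial.eval x f / Polynomial.eval x g)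

/-- The Möbius transformation of `P^1(F)` attached to a `2 × 2` matrix. -/
def moebius {F : Type*} [Field F] (M : Matrix (Fin 2) (Fin 2) F) :
    Option F → Option F
  | none => if M 1 0 = 0 then none else some (M 0 0 / M 1 0)
  | some x =>
      if M 1 0 * x + M 1 1 = 0 then none
      else some ((M 0 0 * x + M 0 1) / (M 1 0 * x + M 1 1))

/-- `φ` is isotrivial over `K = k(t)` if some conjugate `A ∘ φ ∘ A⁻¹` by an element
`A ∈ PGL_2(K)` is given by a rational function all of whose coefficients lie in `k`. -/
def IsIsotrivial (φ : Option (RatFunc k) → Option (RatFunc k)) : Prop :=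
  ∃ M : Matrix (Fin 2) (Fin 2) (RatFunc k), M.det ≠ 0 ∧
    ∃ F G : Polynomial k, IsCoprime F G ∧
      moebius M ∘ φ ∘ moebius M⁻¹ =
        ratApply (F.map (RatFunc.C : k →+* RatFunc k))
          (G.map (RatFunc.C : k →+* RatFunc k)) (max F.natDegree G.natDegree)

/-- The homogeneous resultant of the degree-`d` homogenizations of `f` and `g`, as the
determinant of the `2d × 2d` Sylvester matrix. -/
def hResultant {F : Type*} [Field F] (d : ℕ) (f g : Polynomial F) : F :=
  Matrix.det (Matrix.of fun i j : Fin (d + d) =>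
    if (i : ℕ) < d then
      (if (i : ℕ) ≤ (j : ℕ) ∧ (j : ℕ) ≤ (i : ℕ) + d then f.coeff (d + (i : ℕ) - (j : ℕ)) else 0)
    else
      (if (i : ℕ) - d ≤ (j : ℕ) ∧ (j : ℕ) ≤ (i : ℕ) then g.coeff ((i : ℕ) - (j : ℕ)) else 0))

/-- `(f, g)` is an S-reduced integral pair: all coefficients are S-integers and they have no
common non-unit factor in `R_S`. -/
def SReducedPair (S : Finset (Place k)) (f g : Polynomial (RatFunc k)) : Prop :=
  (∀ n, f.coeff n ∈ SInt S) ∧ (∀ n, g.coeff n ∈ SInt S) ∧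
    ∀ r : RatFunc k, r ≠ 0 → r ∈ SInt S →
      (∀ n, f.coeff n / r ∈ SInt S) → (∀ n, g.coeff n / r ∈ SInt S) → r ∈ SUnit S

/-- `φ = f/g` (of degree `d`) has simple good reduction at the place `p ∉ S`: written in
S-reduced integral form, the homogeneous resultant has `v_p` equal to `0`. -/
def HasSimpleGoodReductionAt (S : Finset (Place k)) (p : Place k)
    (f g : Polynomial (RatFunc k)) (d : ℕ) : Prop :=
  ∃ c : RatFunc k, c ≠ 0 ∧ SReducedPair S (Polynomial.C c * f) (Polynomial.C c * g) ∧
    placeValT p (hResultant d (Polynomial.C c * f) (Polynomial.C c * g)) = 0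

/-- `φ = f/g` (of degree `d`) has simple good reduction outside `S`: written in S-reduced
integral form, the homogeneous resultant is an S-unit. -/
def HasSimpleGoodReductionOutside (S : Finset (Place k))
    (f g : Polynomial (RatFunc k)) (d : ℕ) : Prop :=
  ∃ c : RatFunc k, c ≠ 0 ∧ SReducedPair S (Polynomial.C c * f) (Polynomial.C c * g) ∧
    hResultant d (Polynomial.C c * f) (Polynomial.C c * g) ∈ SUnit S

/-- `φ` has good reduction at `p` if some conjugate of `φ` by an element of `PGL_2(K)`
has simple good reduction at `p`. -/
def HasGoodReductionAt (S : Finset (Place k)) (p : Place k)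
    (φ : Option (RatFunc k) → Option (RatFunc k)) (d : ℕ) : Prop :=
  ∃ M : Matrix (Fin 2) (Fin 2) (RatFunc k), M.det ≠ 0 ∧
    ∃ F G : Polynomial (RatFunc k), IsCoprime F G ∧ max F.natDegree G.natDegree = d ∧
      moebius M ∘ φ ∘ moebius M⁻¹ = ratApply F G d ∧
      HasSimpleGoodReductionAt S p F G d

/-- `φ` has good reduction outside `S` if it has good reduction at every place `p ∉ S`. -/
def HasGoodReductionOutside (S : Finset (Place k))
    (φ : Option (RatFunc k) → Option (RatFunc k)) (d : ℕ) : Prop :=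
  ∀ p ∉ S, HasGoodReductionAt S p φ d

/-- The quantity `b(d,s) = ((9^(s-1)+1)/2)(2d+1) + 2`. -/
def bnd (d s : ℕ) : ℕ := (9 ^ (s - 1) + 1) / 2 * (2 * d + 1) + 2

/-- The bound `C(d,s)` of Theorem 2: the product over primes `p ≤ b(d,s)` of
`max{b(d,s), p·3^(2s-1)}`. -/
def periodBound (d s : ℕ) : ℕ :=
  ∏ p ∈ Finset.filter Nat.Prime (Finset.range (bnd d s + 1)),
    max (bnd d s) (p * 3 ^ (2 * s - 1))

end

section Aux

open Polynomial
open scoped Classical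

private lemma moebius_one {F : Type*} [Field F] :
    moebius (1 : Matrix (Fin 2) (Fin 2) F) = id := by
  funext x
  cases x with
  | none =>
    show (if (1 : Matrix (Fin 2) (Fin 2) F) 1 0 = 0 then none
      else some ((1 : Matrix (Fin 2) (Fin 2) F) 0 0 / (1 : Matrix (Fin 2) (Fin 2) F) 1 0)) = _
    rw [if_pos (Matrix.one_apply_ne (by decide))]
    rfl
  | some x =>
    show (if (1 : Matrix (Fin 2) (Fin 2) F) 1 0 * x + (1 : Matrix (Fin 2) (Fin 2) F) 1 1 = 0
      then none else some (((1 : Matrix (Fin 2) (Fin 2) F) 0 0 * x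
        + (1 : Matrix (Fin 2) (Fin 2) F) 0 1) / ((1 : Matrix (Fin 2) (Fin 2) F) 1 0 * x
        + (1 : Matrix (Fin 2) (Fin 2) F) 1 1))) = some x
    rw [Matrix.one_apply_ne (by decide), Matrix.one_apply_eq, Matrix.one_apply_eq,
      Matrix.one_apply_ne (by decide)]
    simp

private lemma ratApply_C_mul {F : Type*} [Field F] (c : F) (hc : c ≠ 0)
    (f g : Polynomial F) (d : ℕ) :
    ratApply (Polynomial.C c * f) (Polynomial.C c * g) d = ratApply f g d := by
  funext x
  cases x with
  | none =>
    show (if (Polynomial.C c * g).coeff d = 0 then none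
        else some ((Polynomial.C c * f).coeff d / (Polynomial.C c * g).coeff d)) =
      (if g.coeff d = 0 then none else some (f.coeff d / g.coeff d))
    rw [Polynomial.coeff_C_mul, Polynomial.coeff_C_mul]
    by_cases h : g.coeff d = 0
    · rw [if_pos h, if_pos (by rw [h, mul_zero])]
    · rw [if_neg h, if_neg (mul_ne_zero hc h), mul_div_mul_left _ _ hc]
  | some x =>
    show (if Polynomial.eval x (Polynomial.C c * g) = 0 then none
        else some (Polynomial.eval x (Polynomial.C c * f) / Polynomial.eval x (Polynomial.C c * g)))
      = (if Polynomial.eval x g = 0 then none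
        else some (Polynomial.eval x f / Polynomial.eval x g))
    rw [Polynomial.eval_mul, Polynomial.eval_mul, Polynomial.eval_C]
    by_cases h : Polynomial.eval x g = 0
    · rw [if_pos h, if_pos (by rw [h, mul_zero])]
    · rw [if_neg h, if_neg (mul_ne_zero hc h), mul_div_mul_left _ _ hc]

private lemma key_isotrivial {k : Type*} [Field k] (d : ℕ) (f g : Polynomial (RatFunc k))
    (hfg : IsCoprime f g) (hdeg : max f.natDegree g.natDegree = d)
    (lam mu : Fin (2 * d + 1) → k) (hinj : Function.Injective lam)
    (hpts : ∀ i, ratApply f g d (some (RatFunc.C (lam i))) = some (RatFunc.C (mu i))) :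
    IsIsotrivial (ratApply f g d) := by
  classical
  set CC := (RatFunc.C : k →+* RatFunc k) with hCC
  have hCinj : Function.Injective CC := CC.injective
  have hpts' : ∀ i, g.eval (CC (lam i)) ≠ 0 ∧
      f.eval (CC (lam i)) = CC (mu i) * g.eval (CC (lam i)) := by
    intro i
    have h := hpts i
    show g.eval (CC (lam i)) ≠ 0 ∧ _
    simp only [ratApply] at h
    by_cases hg : Polynomial.eval (CC (lam i)) g = 0
    · rw [if_pos hg] at h; exact absurd h (by simp)
    · rw [if_neg hg] at h
      exact ⟨hg, (div_eq_iff hg).mp (Option.some.inj h)⟩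
  -- g ≠ 0
  have hg0 : g ≠ 0 := by
    intro h
    exact (hpts' ⟨0, by omega⟩).1 (by rw [h, Polynomial.eval_zero])
  by_cases hf0 : f = 0
  · -- degenerate case : f = 0, g a unit, d = 0
    have hunit : IsUnit g := isCoprime_zero_left.mp (hf0 ▸ hfg)
    obtain ⟨r, hru, hrg⟩ := Polynomial.isUnit_iff.mp hunit
    have hr0 : r ≠ 0 := hru.ne_zero
    have hd : d = 0 := by
      rw [← hdeg, hf0, ← hrg]
      simp
    refine ⟨1, by simp, 0, 1, isCoprime_zero_left.mpr isUnit_one, ?_⟩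
    rw [inv_one, moebius_one]
    have : (id : Option (RatFunc k) → _) ∘ ratApply f g d ∘ id = ratApply f g d := rfl
    rw [this]
    subst hd hf0
    funext x
    cases x with
    | none =>
      show (if g.coeff 0 = 0 then none else some ((0 : (RatFunc k)[X]).coeff 0 / g.coeff 0)) = _
      rw [if_neg (by rw [← hrg, Polynomial.coeff_C]; simpa using hr0)]
      simp [ratApply]
    | some x =>
      show (if Polynomial.eval x g = 0 then none
        else some (Polynomial.eval x (0 : (RatFunc k)[X]) / Polynomial.eval x g)) = _
      rw [if_neg (by rw [← hrg, Polynomial.eval_C]; exact hr0)]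
      simp [ratApply]
  -- main case
  · have hN : 2 * d + 1 < d + 1 + (d + 1) := by omega
    set A : Matrix (Fin (d + 1 + (d + 1))) (Fin (d + 1 + (d + 1))) k :=
      Matrix.of fun i j =>
        if hi : (i : ℕ) < 2 * d + 1 then
          (if (j : ℕ) < d + 1 then lam ⟨i, hi⟩ ^ (j : ℕ)
           else - mu ⟨i, hi⟩ * lam ⟨i, hi⟩ ^ ((j : ℕ) - (d + 1)))
        else 0 with hA
    have hdet : A.det = 0 := by
      apply Matrix.det_eq_zero_of_row_eq_zero ⟨2 * d + 1, hN⟩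
      intro j
      show (if hi : ((⟨2 * d + 1, hN⟩ : Fin (d + 1 + (d + 1))) : ℕ) < 2 * d + 1 then _ else 0) = 0
      rw [dif_neg (by simp)]
    obtain ⟨v, hv0, hAv⟩ := Matrix.exists_mulVec_eq_zero_iff.mpr hdet
    set w : ℕ → k := fun j => if h : j < d + 1 + (d + 1) then v ⟨j, h⟩ else 0 with hw
    set F : Polynomial k := ∑ j ∈ Finset.range (d + 1), Polynomial.C (w j) * Polynomial.X ^ j
      with hF
    set G : Polynomial k :=
      ∑ j ∈ Finset.range (d + 1), Polynomial.C (w (d + 1 + j)) * Polynomial.X ^ j with hG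
    have hFdeg : F.natDegree ≤ d := natDegree_sum_le_of_forall_le _ _ (fun i hi => by
      refine le_trans (natDegree_C_mul_le _ _) ?_
      simpa using Nat.lt_succ_iff.mp (Finset.mem_range.mp hi))
    have hGdeg : G.natDegree ≤ d := natDegree_sum_le_of_forall_le _ _ (fun i hi => by
      refine le_trans (natDegree_C_mul_le _ _) ?_
      simpa using Nat.lt_succ_iff.mp (Finset.mem_range.mp hi))
    have hFcoeff : ∀ m, m < d + 1 → F.coeff m = w m := by
      intro m hm
      rw [hF, finset_sum_coeff]
      simp only [Polynomial.coeff_C_mul, Polynomial.coeff_X_pow, mul_ite, mul_one, mul_zero]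
      rw [Finset.sum_ite_eq (Finset.range (d + 1)) m (fun j => w j), if_pos (Finset.mem_range.mpr hm)]
    have hGcoeff : ∀ m, m < d + 1 → G.coeff m = w (d + 1 + m) := by
      intro m hm
      rw [hG, finset_sum_coeff]
      simp only [Polynomial.coeff_C_mul, Polynomial.coeff_X_pow, mul_ite, mul_one, mul_zero]
      rw [Finset.sum_ite_eq (Finset.range (d + 1)) m (fun j => w (d + 1 + j)),
        if_pos (Finset.mem_range.mpr hm)]
    have hFGne : ¬(F = 0 ∧ G = 0) := by
      rintro ⟨hF0, hG0⟩
      apply hv0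
      funext j
      by_cases hj : (j : ℕ) < d + 1
      · have : w (j : ℕ) = 0 := by rw [← hFcoeff _ hj, hF0, Polynomial.coeff_zero]
        simp only [hw] at this
        rw [dif_pos j.isLt] at this
        simpa using this
      · have hj2 : (j : ℕ) - (d + 1) < d + 1 := by omega
        have : w (d + 1 + ((j : ℕ) - (d + 1))) = 0 := by
          rw [← hGcoeff _ hj2, hG0, Polynomial.coeff_zero]
        have hsum : d + 1 + ((j : ℕ) - (d + 1)) = (j : ℕ) := by omega
        rw [hsum] at this
        simp only [hw] at this
        rw [dif_pos j.isLt] at this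
        simpa using this
    -- the interpolation conditions
    have hrow : ∀ i : Fin (2 * d + 1), F.eval (lam i) = mu i * G.eval (lam i) := by
      intro i
      have h0 : (A.mulVec v) ⟨(i : ℕ), by omega⟩ = 0 := by rw [hAv]; rfl
      rw [Matrix.mulVec, dotProduct] at h0
      rw [Fin.sum_univ_add] at h0
      have e1 : ∀ j : Fin (d + 1),
          A ⟨(i : ℕ), by omega⟩ (Fin.castAdd (d + 1) j) * v (Fin.castAdd (d + 1) j)
            = lam i ^ (j : ℕ) * w (j : ℕ) := by
        intro j
        have hAij : A ⟨(i : ℕ), by omega⟩ (Fin.castAdd (d + 1) j) = lam i ^ (j : ℕ) := by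
          show (if hi : (i : ℕ) < 2 * d + 1 then
            (if ((Fin.castAdd (d + 1) j : Fin (d + 1 + (d + 1))) : ℕ) < d + 1
              then lam ⟨(i : ℕ), hi⟩ ^ ((Fin.castAdd (d + 1) j : Fin (d + 1 + (d + 1))) : ℕ)
              else _) else 0) = lam i ^ (j : ℕ)
          rw [dif_pos i.isLt, if_pos (by simpa using j.isLt)]
          simp
        have hvj : v (Fin.castAdd (d + 1) j) = w (j : ℕ) := by
          simp only [hw]
          rw [dif_pos (show (j : ℕ) < d + 1 + (d + 1) by omega)]
          rfl
        rw [hAij, hvj]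
      have e2 : ∀ j : Fin (d + 1),
          A ⟨(i : ℕ), by omega⟩ (Fin.natAdd (d + 1) j) * v (Fin.natAdd (d + 1) j)
            = -(mu i * (lam i ^ (j : ℕ) * w (d + 1 + (j : ℕ)))) := by
        intro j
        have hAij : A ⟨(i : ℕ), by omega⟩ (Fin.natAdd (d + 1) j)
            = - mu i * lam i ^ (j : ℕ) := by
          show (if hi : (i : ℕ) < 2 * d + 1 then
            (if ((Fin.natAdd (d + 1) j : Fin (d + 1 + (d + 1))) : ℕ) < d + 1
              then _
              else - mu ⟨(i : ℕ), hi⟩ *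
                lam ⟨(i : ℕ), hi⟩ ^ (((Fin.natAdd (d + 1) j : Fin (d + 1 + (d + 1))) : ℕ) - (d + 1)))
            else 0) = - mu i * lam i ^ (j : ℕ)
          rw [dif_pos i.isLt, if_neg (by simp; omega)]
          simp
        have hvj : v (Fin.natAdd (d + 1) j) = w (d + 1 + (j : ℕ)) := by
          simp only [hw]
          rw [dif_pos (show d + 1 + (j : ℕ) < d + 1 + (d + 1) by omega)]
          rfl
        rw [hAij, hvj]; ring
      rw [Finset.sum_congr rfl (fun j _ => e1 j)] at h0
      rw [Finset.sum_congr rfl (fun j _ => e2 j)] at h0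
      have hFe : F.eval (lam i) = ∑ j : Fin (d + 1), lam i ^ (j : ℕ) * w (j : ℕ) := by
        rw [hF, Polynomial.eval_finset_sum, Fin.sum_univ_eq_sum_range
          (fun j => lam i ^ j * w j) (d + 1)]
        exact Finset.sum_congr rfl (fun j _ => by
          rw [Polynomial.eval_mul, Polynomial.eval_C, Polynomial.eval_pow, Polynomial.eval_X]; ring)
      have hGe : G.eval (lam i) = ∑ j : Fin (d + 1), lam i ^ (j : ℕ) * w (d + 1 + (j : ℕ)) := by
        rw [hG, Polynomial.eval_finset_sum, Fin.sum_univ_eq_sum_range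
          (fun j => lam i ^ j * w (d + 1 + j)) (d + 1)]
        exact Finset.sum_congr rfl (fun j _ => by
          rw [Polynomial.eval_mul, Polynomial.eval_C, Polynomial.eval_pow, Polynomial.eval_X]; ring)
      rw [hFe, hGe, Finset.mul_sum]
      rw [Finset.sum_neg_distrib, add_neg_eq_zero] at h0
      exact h0
    -- pass to K[z]
    set F' : Polynomial (RatFunc k) := F.map CC with hF'
    set G' : Polynomial (RatFunc k) := G.map CC with hG'
    have hmapeval : ∀ (x : k) (P : Polynomial k), (P.map CC).eval (CC x) = CC (P.eval x) := by
      intro x P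
      rw [Polynomial.eval_map, Polynomial.eval₂_at_apply]
    have hprod : f * G' = g * F' := by
      have hz : f * G' - g * F' = 0 := by
        apply Polynomial.eq_zero_of_natDegree_lt_card_of_eval_eq_zero _
          (f := fun i : Fin (2 * d + 1) => CC (lam i)) (hCinj.comp hinj)
        · intro i
          obtain ⟨hgne, hfe⟩ := hpts' i
          rw [Polynomial.eval_sub, Polynomial.eval_mul, Polynomial.eval_mul, hF', hG',
            hmapeval, hmapeval, hfe, hrow i, map_mul]
          ring
        · have h1 : f.natDegree ≤ d := le_of_max_le_left hdeg.le
          have h2 : g.natDegree ≤ d := le_of_max_le_right hdeg.le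
          have h3 : F'.natDegree ≤ d := by
            rw [hF', Polynomial.natDegree_map_eq_of_injective hCinj]; exact hFdeg
          have h4 : G'.natDegree ≤ d := by
            rw [hG', Polynomial.natDegree_map_eq_of_injective hCinj]; exact hGdeg
          have h5 : (f * G' - g * F').natDegree ≤ 2 * d := by
            refine le_trans (Polynomial.natDegree_sub_le _ _) (max_le ?_ ?_) <;>
              refine le_trans (Polynomial.natDegree_mul_le) (by omega)
          simpa using lt_of_le_of_lt h5 (show 2 * d < 2 * d + 1 by omega)
      exact sub_eq_zero.mp hz
    -- f divides F'
    have hdvd : f ∣ F' := hfg.dvd_of_dvd_mul_left ⟨G', hprod.symm⟩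
    obtain ⟨u, hu⟩ := hdvd
    have hu0 : u ≠ 0 := by
      rintro rfl
      rw [mul_zero] at hu
      have hG'0 : G' = 0 := by
        have hz : f * G' = 0 := by rw [hprod, hu, mul_zero]
        exact (mul_eq_zero.mp hz).resolve_left hf0
      have h1 : F = 0 := Polynomial.map_injective CC hCinj
        (by rw [← hF', hu, Polynomial.map_zero])
      have h2 : G = 0 := Polynomial.map_injective CC hCinj
        (by rw [← hG', hG'0, Polynomial.map_zero])
      exact hFGne ⟨h1, h2⟩
    have hGu : G' = g * u := by
      apply mul_left_cancel₀ hf0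
      rw [hprod, hu]; ring
    -- u is a nonzero constant
    have hudeg : u.natDegree = 0 := by
      have hF'le : f.natDegree + u.natDegree ≤ d := by
        rw [← Polynomial.natDegree_mul hf0 hu0, ← hu, hF',
          Polynomial.natDegree_map_eq_of_injective hCinj]
        exact hFdeg
      have hG'le : g.natDegree + u.natDegree ≤ d := by
        rw [← Polynomial.natDegree_mul hg0 hu0, ← hGu, hG',
          Polynomial.natDegree_map_eq_of_injective hCinj]
        exact hGdeg
      rcases max_choice f.natDegree g.natDegree with hmax | hmax <;> rw [hmax] at hdeg <;> omega
    obtain ⟨c, hc⟩ : ∃ c : RatFunc k, u = Polynomial.C c :=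
      ⟨u.coeff 0, Polynomial.eq_C_of_natDegree_eq_zero hudeg⟩
    have hc0 : c ≠ 0 := by rintro rfl; exact hu0 (by simp [hc])
    have hF'c : F' = Polynomial.C c * f := by rw [hu, hc]; ring
    have hG'c : G' = Polynomial.C c * g := by rw [hGu, hc]; ring
    -- coprimality over k
    have hcop' : IsCoprime F' G' := by
      rw [hF'c, hG'c]
      exact (isCoprime_mul_unit_left
        (Polynomial.isUnit_C.mpr (isUnit_iff_ne_zero.mpr hc0)) f g).mpr hfg
    have hcop : IsCoprime F G := (Polynomial.isCoprime_map CC).mp hcop'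
    -- degrees
    have hmax : max F.natDegree G.natDegree = d := by
      have e1 : F.natDegree = f.natDegree := by
        rw [← Polynomial.natDegree_map_eq_of_injective hCinj F, ← hF', hF'c,
          Polynomial.natDegree_C_mul hc0]
      have e2 : G.natDegree = g.natDegree := by
        rw [← Polynomial.natDegree_map_eq_of_injective hCinj G, ← hG', hG'c,
          Polynomial.natDegree_C_mul hc0]
      rw [e1, e2, hdeg]
    refine ⟨1, by simp, F, G, hcop, ?_⟩
    rw [inv_one, moebius_one]
    have hid : (id : Option (RatFunc k) → _) ∘ ratApply f g d ∘ id = ratApply f g d := rfl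
    rw [hid, hmax, ← hCC, ← hF', ← hG', hF'c, hG'c, ratApply_C_mul c hc0]

end Aux

theorem constant_pairs_bound {k : Type*} [Field k] [IsAlgClosed k] [CharZero k]
    (d : ℕ) (f g : Polynomial (RatFunc k)) (hfg : IsCoprime f g)
    (hdeg : max f.natDegree g.natDegree = d)
    (hiso : ¬ IsIsotrivial (ratApply f g d)) :
    {q : k × k | ratApply f g d (some (RatFunc.C q.1)) = some (RatFunc.C q.2)}.Finite ∧
    {q : k × k | ratApply f g d (some (RatFunc.C q.1)) = some (RatFunc.C q.2)}.ncard ≤ 2 * d := by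
  classical
  set T := {q : k × k | ratApply f g d (some (RatFunc.C q.1)) = some (RatFunc.C q.2)} with hT
  have hInj : Set.InjOn Prod.fst T := by
    rintro ⟨a, b⟩ hab ⟨a', b'⟩ hab' (h : a = a')
    subst h
    have h1 : ratApply f g d (some (RatFunc.C a)) = some (RatFunc.C b) := hab
    have h2 : ratApply f g d (some (RatFunc.C a)) = some (RatFunc.C b') := hab'
    have : (RatFunc.C b : RatFunc k) = RatFunc.C b' := Option.some.inj (h1 ▸ h2)
    have hb : b = b' := (RatFunc.C : k →+* RatFunc k).injective this
    rw [hb]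
  have hkey : ∀ t : Finset k, ↑t ⊆ Prod.fst '' T → t.card ≠ 2 * d + 1 := by
    intro t hts hcard
    have e : {x // x ∈ t} ≃ Fin (2 * d + 1) :=
      Fintype.equivFinOfCardEq (by rw [Fintype.card_coe, hcard])
    set lam : Fin (2 * d + 1) → k := fun i => ((e.symm i : {x // x ∈ t}) : k) with hlam
    have hlinj : Function.Injective lam :=
      Subtype.val_injective.comp e.symm.injective
    have hmem : ∀ i, lam i ∈ Prod.fst '' T := fun i => hts (e.symm i).2
    have hmu : ∀ i, ∃ μ, ((lam i, μ) : k × k) ∈ T := by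
      intro i
      obtain ⟨q, hq, hq1⟩ := hmem i
      refine ⟨q.2, ?_⟩
      have : ((lam i, q.2) : k × k) = q := Prod.ext hq1.symm rfl
      rw [this]; exact hq
    choose mu hmuT using hmu
    exact hiso (key_isotrivial d f g hfg hdeg lam mu hlinj (fun i => hmuT i))
  have hSfin : (Prod.fst '' T).Finite := by
    by_contra h
    have hinf : (Prod.fst '' T).Infinite := h
    obtain ⟨u, hu_sub, hufin, hucard⟩ := hinf.exists_subset_ncard_eq (2 * d + 1)
    refine hkey hufin.toFinset (by rw [Set.Finite.coe_toFinset]; exact hu_sub) ?_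
    rw [← Set.ncard_eq_toFinset_card u hufin, hucard]
  have hTfin : T.Finite := Set.Finite.of_finite_image hSfin hInj
  refine ⟨hTfin, ?_⟩
  by_contra h2
  push_neg at h2
  have hle : 2 * d + 1 ≤ (Prod.fst '' T).ncard := by
    rw [Set.ncard_image_of_injOn hInj]; omega
  obtain ⟨u, hu_sub, hucard⟩ := Set.exists_subset_card_eq hle
  have hufin : u.Finite := hSfin.subset hu_sub
  refine hkey hufin.toFinset (by rw [Set.Finite.coe_toFinset]; exact hu_sub) ?_
  rw [← Set.ncard_eq_toFinset_card u hufin, hucard]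
end

section
/- Let φ ∈ K(z) be a rational function with simple good reduction outside S, and let P_{−m+1}, P_{−m+2}, …, P_{−1}, P_0 ∈ P^1(K) be an orbit for φ ending in a fixed point, i.e. φ(P_{−i}) = P_{−i+1} for 1 ≤ i ≤ m−1, P_0 = [0 : 1], and φ(P_0) = P_0. Then for all integers a, b with 0 < a < b ≤ m−1 and every place p ∉ S, one has δ_p(P_{−b}, P_{−a}) = δ_p(P_{−b}, P_0) ≤ δ_p(P_{−a}, P_0). -/
open Polynomial

section
open Polynomial
variable {k : Type*} [Field k]
namespace CanciAux
open Polynomial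
variable {k : Type*} [Field k]

lemma aux_num (x : RatFunc k) :
    (algebraMap (Polynomial k) (RatFunc k)) x.num = x * algebraMap _ _ x.denom := by
  have h := RatFunc.num_div_denom x
  rw [div_eq_iff (RatFunc.algebraMap_ne_zero (RatFunc.denom_ne_zero x))] at h
  exact h

lemma placeVal_zero (p : Place k) : placeVal p (0 : RatFunc k) = 0 := by
  cases p with
  | finite α => simp [placeVal]
  | infinity => simp [placeVal]

lemma placeVal_one (p : Place k) : placeVal p (1 : RatFunc k) = 0 := by
  cases p with
  | finite α =>
    simp only [placeVal]
    rw [show (1 : RatFunc k) = algebraMap (Polynomial k) (RatFunc k) 1 from (map_one _).symm,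
      RatFunc.num_algebraMap, RatFunc.denom_algebraMap]
    simp
  | infinity => simp [placeVal, RatFunc.intDegree_one]

lemma placeVal_mul (p : Place k) {x y : RatFunc k} (hx : x ≠ 0) (hy : y ≠ 0) :
    placeVal p (x * y) = placeVal p x + placeVal p y := by
  cases p with
  | infinity =>
    simp only [placeVal, RatFunc.intDegree_mul hx hy]; ring
  | finite α =>
    have hxy : x * y ≠ 0 := mul_ne_zero hx hy
    have key : (x*y).num * (x.denom * y.denom) = x.num * y.num * (x*y).denom := by
      apply RatFunc.algebraMap_injective k
      simp only [map_mul, aux_num]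
      ring
    have h1 : (x*y).num * (x.denom * y.denom) ≠ 0 :=
      mul_ne_zero (RatFunc.num_ne_zero hxy)
        (mul_ne_zero (RatFunc.denom_ne_zero x) (RatFunc.denom_ne_zero y))
    have h2 := rootMultiplicity_mul (x := α) h1
    have h3 := rootMultiplicity_mul (x := α)
      (mul_ne_zero (RatFunc.denom_ne_zero x) (RatFunc.denom_ne_zero y))
    have h4 := rootMultiplicity_mul (x := α) (key ▸ h1)
    have h5 := rootMultiplicity_mul (x := α)
      (mul_ne_zero (RatFunc.num_ne_zero hx) (RatFunc.num_ne_zero hy))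
    rw [key, h4, h5] at h2
    rw [h3] at h2
    simp only [placeVal]
    omega

lemma placeVal_inv (p : Place k) {x : RatFunc k} (hx : x ≠ 0) :
    placeVal p x⁻¹ = - placeVal p x := by
  have h := placeVal_mul p hx (inv_ne_zero hx)
  rw [mul_inv_cancel₀ hx, placeVal_one] at h
  omega

lemma placeVal_neg (p : Place k) (x : RatFunc k) :
    placeVal p (-x) = placeVal p x := by
  by_cases hx : x = 0
  · simp [hx]
  · have hm : (-x) = (-1) * x := by ring
    have h1 : placeVal p ((-1 : RatFunc k) * (-1)) = placeVal p (-1) + placeVal p (-1) :=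
      placeVal_mul p (by norm_num) (by norm_num)
    rw [show ((-1 : RatFunc k) * (-1)) = 1 by ring, placeVal_one] at h1
    rw [hm, placeVal_mul p (by norm_num) hx]
    omega

lemma min_le_placeVal_add (p : Place k) {x y : RatFunc k} (hx : x ≠ 0) (hy : y ≠ 0)
    (hxy : x + y ≠ 0) :
    min (placeVal p x) (placeVal p y) ≤ placeVal p (x + y) := by
  cases p with
  | infinity =>
    have h := RatFunc.intDegree_add_le hy hxy
    simp only [placeVal]
    rcases le_total x.intDegree y.intDegree with h'|h' <;>
      simp [max_def, min_def] at * <;> omega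
  | finite α =>
    set N : Polynomial k := x.num * y.denom + y.num * x.denom with hN
    have key : (x+y).num * (x.denom * y.denom) = N * (x+y).denom := by
      apply RatFunc.algebraMap_injective k
      simp only [map_mul, map_add, aux_num, hN]
      ring
    have hNne : N ≠ 0 := by
      intro h0
      apply RatFunc.num_ne_zero hxy
      have : (x+y).num * (x.denom * y.denom) = 0 := by rw [key, h0, zero_mul]
      rcases mul_eq_zero.mp this with h|h
      · exact h
      · exact absurd h (mul_ne_zero (RatFunc.denom_ne_zero x) (RatFunc.denom_ne_zero y))
    have hrmN : min (rootMultiplicity α x.num + rootMultiplicity α y.denom)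
        (rootMultiplicity α y.num + rootMultiplicity α x.denom) ≤ rootMultiplicity α N := by
      rw [le_rootMultiplicity_iff hNne]
      apply dvd_add
      · calc (X - C α) ^ min (rootMultiplicity α x.num + rootMultiplicity α y.denom)
              (rootMultiplicity α y.num + rootMultiplicity α x.denom)
            ∣ (X - C α) ^ (rootMultiplicity α x.num + rootMultiplicity α y.denom) :=
              pow_dvd_pow _ (min_le_left _ _)
          _ ∣ x.num * y.denom := by
              rw [pow_add]
              exact mul_dvd_mul (pow_rootMultiplicity_dvd _ _) (pow_rootMultiplicity_dvd _ _)
      · calc (X - C α) ^ min (rootMultiplicity α x.num + rootMultiplicity α y.denom)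
              (rootMultiplicity α y.num + rootMultiplicity α x.denom)
            ∣ (X - C α) ^ (rootMultiplicity α y.num + rootMultiplicity α x.denom) :=
              pow_dvd_pow _ (min_le_right _ _)
          _ ∣ y.num * x.denom := by
              rw [pow_add]
              exact mul_dvd_mul (pow_rootMultiplicity_dvd _ _) (pow_rootMultiplicity_dvd _ _)
    have h1 : (x+y).num * (x.denom * y.denom) ≠ 0 :=
      mul_ne_zero (RatFunc.num_ne_zero hxy)
        (mul_ne_zero (RatFunc.denom_ne_zero x) (RatFunc.denom_ne_zero y))
    have h2 := rootMultiplicity_mul (x := α) h1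
    have h3 := rootMultiplicity_mul (x := α)
      (mul_ne_zero (RatFunc.denom_ne_zero x) (RatFunc.denom_ne_zero y))
    have h4 := rootMultiplicity_mul (x := α) (key ▸ h1)
    rw [key, h4] at h2
    rw [h3] at h2
    simp only [placeVal]
    rcases le_total (rootMultiplicity α x.num + rootMultiplicity α y.denom)
      (rootMultiplicity α y.num + rootMultiplicity α x.denom) with h'|h' <;>
      simp only [min_def] at * <;> split_ifs at * <;> omega

end CanciAux

end
section
open Polynomial
variable {k : Type*} [Field k]
namespace CanciAux

lemma vT_zero (p : Place k) : placeValT p (0 : RatFunc k) = ⊤ := if_pos rfl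

lemma vT_eq (p : Place k) {x : RatFunc k} (hx : x ≠ 0) :
    placeValT p x = ((placeVal p x : ℤ) : WithTop ℤ) := if_neg hx

lemma vT_one (p : Place k) : placeValT p (1 : RatFunc k) = 0 := by
  rw [vT_eq p one_ne_zero, placeVal_one]; rfl

lemma vT_mul (p : Place k) (x y : RatFunc k) :
    placeValT p (x * y) = placeValT p x + placeValT p y := by
  by_cases hx : x = 0
  · simp [hx, vT_zero, top_add]
  by_cases hy : y = 0
  · simp [hy, vT_zero, add_top]
  rw [vT_eq p hx, vT_eq p hy, vT_eq p (mul_ne_zero hx hy), placeVal_mul p hx hy]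
  exact_mod_cast rfl

lemma vT_neg (p : Place k) (x : RatFunc k) : placeValT p (-x) = placeValT p x := by
  by_cases hx : x = 0
  · simp [hx]
  · rw [vT_eq p (neg_ne_zero.mpr hx), vT_eq p hx, placeVal_neg]

lemma min_le_vT_add (p : Place k) (x y : RatFunc k) :
    min (placeValT p x) (placeValT p y) ≤ placeValT p (x + y) := by
  by_cases hx : x = 0
  · simp [hx, min_le_iff]
  by_cases hy : y = 0
  · simp [hy, min_le_iff]
  by_cases hxy : x + y = 0
  · simp [hxy, vT_zero]
  rw [vT_eq p hx, vT_eq p hy, vT_eq p hxy]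
  have := min_le_placeVal_add p hx hy hxy
  rw [← WithTop.coe_min]
  exact_mod_cast this

lemma le_vT_sum {ι : Type*} (p : Place k) (cst : WithTop ℤ) {s : Finset ι} {F : ι → RatFunc k}
    (h : ∀ i ∈ s, cst ≤ placeValT p (F i)) : cst ≤ placeValT p (∑ i ∈ s, F i) := by
  classical
  induction s using Finset.induction_on with
  | empty => simp [vT_zero]
  | insert a s' hx IH =>
    rw [Finset.sum_insert hx]
    refine le_trans (le_min (h _ (Finset.mem_insert_self _ _))
      (IH fun i hi => h i (Finset.mem_insert_of_mem hi))) (min_le_vT_add p _ _)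

lemma vT_pow_nonneg (p : Place k) {x : RatFunc k} (h : 0 ≤ placeValT p x) (n : ℕ) :
    0 ≤ placeValT p (x ^ n) := by
  induction n with
  | zero => simp [pow_zero, vT_one]
  | succ n IH => rw [pow_succ, vT_mul]; exact add_nonneg IH h

lemma vT_pow_eq_zero (p : Place k) {x : RatFunc k} (h : placeValT p x = 0) (n : ℕ) :
    placeValT p (x ^ n) = 0 := by
  induction n with
  | zero => simp [pow_zero, vT_one]
  | succ n IH => rw [pow_succ, vT_mul, IH, h]; rfl

/-- The ring of `p`-integral elements. -/
def intRing (p : Place k) : Subring (RatFunc k) where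
  carrier := {x | 0 ≤ placeValT p x}
  zero_mem' := by simp [vT_zero]
  one_mem' := by simp [vT_one]
  add_mem' := by
    intro a b ha hb
    exact le_trans (le_min ha hb) (min_le_vT_add _ _ _)
  mul_mem' := by
    intro a b ha hb
    rw [Set.mem_setOf_eq, vT_mul]
    exact add_nonneg ha hb
  neg_mem' := by
    intro a ha
    rwa [Set.mem_setOf_eq, vT_neg]

lemma mem_intRing {p : Place k} {x : RatFunc k} : x ∈ intRing p ↔ 0 ≤ placeValT p x := Iff.rfl

/-- Homogeneous evaluation of degree `d`. -/
noncomputable def hEval (q : Polynomial (RatFunc k)) (d : ℕ) (u v : RatFunc k) : RatFunc k :=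
  ∑ j ∈ Finset.range (d+1), q.coeff j * u^j * v^(d-j)

lemma hEval_eval {q : Polynomial (RatFunc k)} {d : ℕ} (hq : q.natDegree ≤ d) (x : RatFunc k) :
    hEval q d x 1 = q.eval x := by
  rw [hEval, Polynomial.eval_eq_sum_range' (Nat.lt_succ_of_le hq)]
  exact Finset.sum_congr rfl fun j hj => by rw [one_pow, mul_one]

lemma hEval_inf (q : Polynomial (RatFunc k)) (d : ℕ) :
    hEval q d 1 0 = q.coeff d := by
  rw [hEval, Finset.sum_range_succ]
  have h1 : ∀ j ∈ Finset.range d, q.coeff j * (1:RatFunc k)^j * 0^(d-j) = 0 := by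
    intro j hj
    rw [zero_pow (by simp at hj; omega : d - j ≠ 0), mul_zero]
  rw [Finset.sum_congr rfl h1]
  simp

lemma hEval_smul (q : Polynomial (RatFunc k)) (d : ℕ) (ρ x y : RatFunc k) :
    hEval q d (ρ * x) (ρ * y) = ρ^d * hEval q d x y := by
  rw [hEval, hEval, Finset.mul_sum]
  refine Finset.sum_congr rfl fun j hj => ?_
  have hjd : j + (d - j) = d := by simp at hj; omega
  have hp : ρ^j * ρ^(d-j) = ρ^d := by rw [← pow_add, hjd]
  rw [mul_pow, mul_pow, ← hp]
  ring

lemma vT_hEval_nonneg (p : Place k) {q : Polynomial (RatFunc k)} (d : ℕ)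
    (hc : ∀ n, 0 ≤ placeValT p (q.coeff n)) {u v : RatFunc k}
    (hu : 0 ≤ placeValT p u) (hv : 0 ≤ placeValT p v) :
    0 ≤ placeValT p (hEval q d u v) := by
  refine le_vT_sum p 0 fun j hj => ?_
  rw [vT_mul, vT_mul]
  exact add_nonneg (add_nonneg (hc j) (vT_pow_nonneg p hu j)) (vT_pow_nonneg p hv (d-j))

/-- Key divisibility: the "cross" of two homogeneous evaluations is divisible by the
cross of the coordinates, in any commutative ring. -/
lemma cross_dvd_aux {R : Type*} [CommRing R] (u v u' v' : R) {j1 j2 d : ℕ}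
    (h21 : j2 ≤ j1) (h1d : j1 ≤ d) :
    (u * v' - u' * v) ∣
      u^j1 * v^(d-j1) * (u'^j2 * v'^(d-j2)) - u'^j1 * v'^(d-j1) * (u^j2 * v^(d-j2)) := by
  obtain ⟨n, rfl⟩ : ∃ n, j1 = j2 + n := ⟨j1 - j2, by omega⟩
  have h2 : d - j2 = (d - (j2 + n)) + n := by omega
  rw [h2]
  have key : u^(j2+n) * v^(d-(j2+n)) * (u'^j2 * v'^((d-(j2+n))+n))
      - u'^(j2+n) * v'^(d-(j2+n)) * (u^j2 * v^((d-(j2+n))+n))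
      = (u^j2 * u'^j2 * v^(d-(j2+n)) * v'^(d-(j2+n))) * ((u*v')^n - (u'*v)^n) := by
    rw [pow_add, pow_add, pow_add, pow_add]
    ring
  rw [key]
  exact Dvd.dvd.mul_left (sub_dvd_pow_sub_pow _ _ n) _

lemma cross_dvd {R : Type*} [CommRing R] (c c' : ℕ → R) (d : ℕ) (u v u' v' : R) :
    (u * v' - u' * v) ∣
      ((∑ j ∈ Finset.range (d+1), c j * u^j * v^(d-j)) *
        (∑ j ∈ Finset.range (d+1), c' j * u'^j * v'^(d-j))
       - (∑ j ∈ Finset.range (d+1), c j * u'^j * v'^(d-j)) *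
        (∑ j ∈ Finset.range (d+1), c' j * u^j * v^(d-j))) := by
  rw [Finset.sum_mul_sum, Finset.sum_mul_sum, ← Finset.sum_sub_distrib]
  refine Finset.dvd_sum fun j1 hj1 => ?_
  rw [← Finset.sum_sub_distrib]
  refine Finset.dvd_sum fun j2 hj2 => ?_
  have hj1d : j1 ≤ d := by simp at hj1; omega
  have hj2d : j2 ≤ d := by simp at hj2; omega
  have hfac : (c j1 * u^j1 * v^(d-j1)) * (c' j2 * u'^j2 * v'^(d-j2))
      - (c j1 * u'^j1 * v'^(d-j1)) * (c' j2 * u^j2 * v^(d-j2))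
      = (c j1 * c' j2) * (u^j1 * v^(d-j1) * (u'^j2 * v'^(d-j2))
          - u'^j1 * v'^(d-j1) * (u^j2 * v^(d-j2))) := by ring
  rw [hfac]
  rcases le_total j2 j1 with h|h
  · exact Dvd.dvd.mul_left (cross_dvd_aux u v u' v' h hj1d) _
  · refine Dvd.dvd.mul_left ?_ _
    have h1 := cross_dvd_aux u' v' u v h hj2d
    have h2 : (u * v' - u' * v) ∣
        (u'^j2 * v'^(d-j2) * (u^j1 * v^(d-j1)) - u^j2 * v^(d-j2) * (u'^j1 * v'^(d-j1))) := by
      rw [show u * v' - u' * v = -(u' * v - u * v') by ring]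
      exact (neg_dvd).mpr h1
    rw [show u^j1 * v^(d-j1) * (u'^j2 * v'^(d-j2)) - u'^j1 * v'^(d-j1) * (u^j2 * v^(d-j2))
        = u'^j2 * v'^(d-j2) * (u^j1 * v^(d-j1)) - u^j2 * v^(d-j2) * (u'^j1 * v'^(d-j1)) by ring]
    exact h2

end CanciAux
end
section
open Polynomial
variable {k : Type*} [Field k]
namespace CanciAux

lemma vT_cross_hEval (p : Place k) {q1 q2 : Polynomial (RatFunc k)} (d : ℕ)
    (hc1 : ∀ n, 0 ≤ placeValT p (q1.coeff n)) (hc2 : ∀ n, 0 ≤ placeValT p (q2.coeff n))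
    {u v u' v' : RatFunc k}
    (hu : 0 ≤ placeValT p u) (hv : 0 ≤ placeValT p v)
    (hu' : 0 ≤ placeValT p u') (hv' : 0 ≤ placeValT p v') :
    placeValT p (u * v' - u' * v) ≤
      placeValT p (hEval q1 d u v * hEval q2 d u' v' - hEval q1 d u' v' * hEval q2 d u v) := by
  set O := intRing p
  set U : O := ⟨u, hu⟩
  set V : O := ⟨v, hv⟩
  set U' : O := ⟨u', hu'⟩
  set V' : O := ⟨v', hv'⟩
  set C1 : ℕ → O := fun n => ⟨q1.coeff n, hc1 n⟩
  set C2 : ℕ → O := fun n => ⟨q2.coeff n, hc2 n⟩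
  obtain ⟨E, hE⟩ := cross_dvd C1 C2 d U V U' V'
  have hcast := congrArg (intRing p).subtype hE
  simp only [map_sub, map_mul, map_sum, map_pow] at hcast
  have hder : hEval q1 d u v * hEval q2 d u' v' - hEval q1 d u' v' * hEval q2 d u v
      = (u * v' - u' * v) * (E : RatFunc k) := by
    rw [hEval, hEval, hEval, hEval]
    exact hcast
  rw [hder, vT_mul]
  exact le_add_of_nonneg_right E.2

/-- The Sylvester-type matrix whose determinant is `hResultant`. -/
noncomputable def sylv (q1 q2 : Polynomial (RatFunc k)) (d : ℕ) :
    Matrix (Fin (d + d)) (Fin (d + d)) (RatFunc k) :=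
  Matrix.of fun i j : Fin (d + d) =>
    if (i : ℕ) < d then
      (if (i : ℕ) ≤ (j : ℕ) ∧ (j : ℕ) ≤ (i : ℕ) + d then q1.coeff (d + (i : ℕ) - (j : ℕ)) else 0)
    else
      (if (i : ℕ) - d ≤ (j : ℕ) ∧ (j : ℕ) ≤ (i : ℕ) then q2.coeff ((i : ℕ) - (j : ℕ)) else 0)

lemma sylv_entry_mem (p : Place k) {q1 q2 : Polynomial (RatFunc k)} {d : ℕ}
    (hc1 : ∀ n, 0 ≤ placeValT p (q1.coeff n)) (hc2 : ∀ n, 0 ≤ placeValT p (q2.coeff n))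
    (i j : Fin (d + d)) : sylv q1 q2 d i j ∈ intRing p := by
  rw [sylv, Matrix.of_apply]
  split_ifs
  · exact hc1 _
  · exact zero_mem _
  · exact hc2 _
  · exact zero_mem _

lemma adjugate_sylv_nonneg (p : Place k) {q1 q2 : Polynomial (RatFunc k)} {d : ℕ}
    (hc1 : ∀ n, 0 ≤ placeValT p (q1.coeff n)) (hc2 : ∀ n, 0 ≤ placeValT p (q2.coeff n))
    (i j : Fin (d + d)) : 0 ≤ placeValT p ((sylv q1 q2 d).adjugate i j) := by
  classical
  set M : Matrix (Fin (d+d)) (Fin (d+d)) (intRing p) :=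
    fun i j => ⟨sylv q1 q2 d i j, sylv_entry_mem p hc1 hc2 i j⟩ with hM
  have hmap : ((intRing p).subtype).mapMatrix M = sylv q1 q2 d := by
    ext i' j'
    rfl
  have := RingHom.map_adjugate ((intRing p).subtype) M
  rw [hmap] at this
  have h2 : (sylv q1 q2 d).adjugate i j = ((M.adjugate i j : intRing p) : RatFunc k) := by
    rw [← this]; rfl
  rw [h2]
  exact (M.adjugate i j).2

/-- Computation of the Sylvester matrix times the vector of monomials. -/
lemma sylv_mulVec {q1 q2 : Polynomial (RatFunc k)} {d : ℕ} (u v : RatFunc k)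
    (i : Fin (d + d)) :
    (sylv q1 q2 d).mulVec (fun j : Fin (d + d) => u^(d+d-1-(j:ℕ)) * v^(j:ℕ)) i =
      if (i : ℕ) < d then u^(d-1-(i:ℕ)) * v^(i:ℕ) * hEval q1 d u v
      else u^(d+d-1-(i:ℕ)) * v^((i:ℕ)-d) * hEval q2 d u v := by
  classical
  have hrefl : ∀ (q : Polynomial (RatFunc k)),
      hEval q d u v = ∑ l ∈ Finset.range (d+1), q.coeff (d-l) * u^(d-l) * v^l := by
    intro q
    rw [hEval, ← Finset.sum_range_reflect]
    refine Finset.sum_congr rfl fun l hl => ?_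
    have hld : l ≤ d := by simp at hl; omega
    have h1 : d + 1 - 1 - l = d - l := by omega
    have h2 : d - (d - l) = l := by omega
    rw [h1, h2]
  have hmv : (sylv q1 q2 d).mulVec (fun j : Fin (d + d) => u^(d+d-1-(j:ℕ)) * v^(j:ℕ)) i
      = ∑ j ∈ Finset.range (d+d),
          (if (i : ℕ) < d then
            (if (i : ℕ) ≤ j ∧ j ≤ (i : ℕ) + d then q1.coeff (d + (i : ℕ) - j) else 0)
          else
            (if (i : ℕ) - d ≤ j ∧ j ≤ (i : ℕ) then q2.coeff ((i : ℕ) - j) else 0))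
          * (u^(d+d-1-j) * v^j) := by
    rw [Matrix.mulVec, dotProduct]
    rw [← Fin.sum_univ_eq_sum_range (fun j => _ * (u^(d+d-1-j) * v^j)) (d+d)]
    rfl
  rw [hmv]
  by_cases hi : (i : ℕ) < d
  · simp only [if_pos hi]
    have himem : ∀ l ∈ Finset.range (d+1), (i:ℕ) + l ∈ Finset.range (d+d) := by
      intro l hl; simp at hl ⊢; omega
    rw [show (∑ j ∈ Finset.range (d+d),
          (if (i : ℕ) ≤ j ∧ j ≤ (i : ℕ) + d then q1.coeff (d + (i : ℕ) - j) else 0)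
          * (u^(d+d-1-j) * v^j))
        = ∑ j ∈ (Finset.range (d+1)).image (fun l => (i:ℕ) + l),
          (if (i : ℕ) ≤ j ∧ j ≤ (i : ℕ) + d then q1.coeff (d + (i : ℕ) - j) else 0)
          * (u^(d+d-1-j) * v^j) from (Finset.sum_subset
            (by intro j hj; simp at hj ⊢; omega)
            (by intro j hj1 hj2
                simp only [Finset.mem_image, Finset.mem_range] at hj2
                rw [if_neg, zero_mul]
                intro ⟨ha, hb⟩
                exact hj2 ⟨j - (i:ℕ), by omega, by omega⟩)).symm]
    rw [Finset.sum_image (by intro a _ b _ h; simp only at h; omega)]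
    rw [hrefl q1, Finset.mul_sum]
    refine Finset.sum_congr rfl fun l hl => ?_
    have hld : l ≤ d := by simp at hl; omega
    rw [if_pos ⟨by omega, by omega⟩]
    have e1 : d + (i:ℕ) - ((i:ℕ) + l) = d - l := by omega
    have e2 : d + d - 1 - ((i:ℕ) + l) = (d-1-(i:ℕ)) + (d-l) := by omega
    have e3 : (i:ℕ) + l = (i:ℕ) + l := rfl
    rw [e1, e2, pow_add, pow_add]
    ring
  · simp only [if_neg hi]
    have hid : d ≤ (i:ℕ) := le_of_not_gt hi
    have hi2 : (i:ℕ) < d + d := i.2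
    rw [show (∑ j ∈ Finset.range (d+d),
          (if (i : ℕ) - d ≤ j ∧ j ≤ (i : ℕ) then q2.coeff ((i : ℕ) - j) else 0)
          * (u^(d+d-1-j) * v^j))
        = ∑ j ∈ (Finset.range (d+1)).image (fun l => ((i:ℕ) - d) + l),
          (if (i : ℕ) - d ≤ j ∧ j ≤ (i : ℕ) then q2.coeff ((i : ℕ) - j) else 0)
          * (u^(d+d-1-j) * v^j) from (Finset.sum_subset
            (by intro j hj; simp at hj ⊢; omega)
            (by intro j hj1 hj2
                simp only [Finset.mem_image, Finset.mem_range] at hj2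
                rw [if_neg, zero_mul]
                intro ⟨ha, hb⟩
                exact hj2 ⟨j - ((i:ℕ) - d), by omega, by omega⟩)).symm]
    rw [Finset.sum_image (by intro a _ b _ h; simp only at h; omega)]
    rw [hrefl q2, Finset.mul_sum]
    refine Finset.sum_congr rfl fun l hl => ?_
    have hld : l ≤ d := by simp at hl; omega
    rw [if_pos ⟨by omega, by omega⟩]
    have e1 : (i:ℕ) - ((i:ℕ) - d + l) = d - l := by omega
    have e2 : d + d - 1 - ((i:ℕ) - d + l) = (d+d-1-(i:ℕ)) + (d-l) := by omega
    rw [e1, e2, pow_add, pow_add]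
    ring

end CanciAux
end
section
open Polynomial
variable {k : Type*} [Field k]
namespace CanciAux

lemma hResultant_eq_det (d : ℕ) (q1 q2 : Polynomial (RatFunc k)) :
    hResultant d q1 q2 = (sylv q1 q2 d).det := rfl

/-- If `(u,v)` is a normalized pair and the resultant is a `p`-unit, then the pair of
homogeneous evaluations is again normalized. -/
lemma hEval_pair_normalized (p : Place k) {q1 q2 : Polynomial (RatFunc k)} {d : ℕ} (hd : 1 ≤ d)
    (hc1 : ∀ n, 0 ≤ placeValT p (q1.coeff n)) (hc2 : ∀ n, 0 ≤ placeValT p (q2.coeff n))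
    (hres : placeValT p (hResultant d q1 q2) = 0)
    {u v : RatFunc k} (hu : 0 ≤ placeValT p u) (hv : 0 ≤ placeValT p v)
    (hm : placeValT p u = 0 ∨ placeValT p v = 0) :
    0 ≤ placeValT p (hEval q1 d u v) ∧ 0 ≤ placeValT p (hEval q2 d u v) ∧
      (placeValT p (hEval q1 d u v) = 0 ∨ placeValT p (hEval q2 d u v) = 0) := by
  classical
  have hF : 0 ≤ placeValT p (hEval q1 d u v) := vT_hEval_nonneg p d hc1 hu hv
  have hG : 0 ≤ placeValT p (hEval q2 d u v) := vT_hEval_nonneg p d hc2 hu hv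
  refine ⟨hF, hG, ?_⟩
  set w : Fin (d+d) → RatFunc k := fun j => u^(d+d-1-(j:ℕ)) * v^(j:ℕ) with hw
  have hA : ∀ j : Fin (d+d), (sylv q1 q2 d).adjugate.mulVec ((sylv q1 q2 d).mulVec w) j
      = (sylv q1 q2 d).det * w j := by
    intro j
    rw [Matrix.mulVec_mulVec, Matrix.adjugate_mul, Matrix.smul_mulVec, Matrix.one_mulVec]
    simp
  -- choose the index with unit monomial
  obtain ⟨j₀, hj₀⟩ : ∃ j₀ : Fin (d+d), placeValT p (w j₀) = 0 := by
    rcases hm with h|h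
    · refine ⟨⟨0, by omega⟩, ?_⟩
      simp only [hw]
      rw [pow_zero, mul_one]
      exact vT_pow_eq_zero p h _
    · refine ⟨⟨d+d-1, by omega⟩, ?_⟩
      simp only [hw]
      have : d + d - 1 - (d+d-1) = 0 := by omega
      rw [this, pow_zero, one_mul]
      exact vT_pow_eq_zero p h _
  set μ := min (placeValT p (hEval q1 d u v)) (placeValT p (hEval q2 d u v)) with hμ
  have hkey : μ ≤ 0 := by
    have hval : placeValT p ((sylv q1 q2 d).det * w j₀) = 0 := by
      rw [vT_mul, ← hResultant_eq_det, hres, hj₀]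
      rfl
    have hfun := hA j₀
    have hrhs : μ ≤ placeValT p ((sylv q1 q2 d).adjugate.mulVec ((sylv q1 q2 d).mulVec w) j₀) := by
      rw [Matrix.mulVec, dotProduct]
      refine le_vT_sum p μ fun i _ => ?_
      rw [vT_mul]
      have h1 : 0 ≤ placeValT p ((sylv q1 q2 d).adjugate j₀ i) :=
        adjugate_sylv_nonneg p hc1 hc2 j₀ i
      have h2 : μ ≤ placeValT p ((sylv q1 q2 d).mulVec w i) := by
        rw [sylv_mulVec u v i]
        split_ifs
        · rw [vT_mul, vT_mul]
          refine le_trans (min_le_left _ _) ?_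
          calc placeValT p (hEval q1 d u v)
              ≤ placeValT p (v^(i:ℕ)) + placeValT p (hEval q1 d u v) :=
                le_add_of_nonneg_left (vT_pow_nonneg p hv _)
            _ ≤ placeValT p (u^(d-1-(i:ℕ))) + placeValT p (v^(i:ℕ)) + placeValT p (hEval q1 d u v) := by
                rw [add_assoc]
                exact le_add_of_nonneg_left (vT_pow_nonneg p hu _)
        · rw [vT_mul, vT_mul]
          refine le_trans (min_le_right _ _) ?_
          calc placeValT p (hEval q2 d u v)
              ≤ placeValT p (v^((i:ℕ)-d)) + placeValT p (hEval q2 d u v) :=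
                le_add_of_nonneg_left (vT_pow_nonneg p hv _)
            _ ≤ placeValT p (u^(d+d-1-(i:ℕ))) + placeValT p (v^((i:ℕ)-d)) + placeValT p (hEval q2 d u v) := by
                rw [add_assoc]
                exact le_add_of_nonneg_left (vT_pow_nonneg p hu _)
      calc μ ≤ placeValT p ((sylv q1 q2 d).mulVec w i) := h2
        _ ≤ placeValT p ((sylv q1 q2 d).adjugate j₀ i) + placeValT p ((sylv q1 q2 d).mulVec w i) :=
          le_add_of_nonneg_left h1
    rw [hfun] at hrhs
    exact le_trans hrhs (le_of_eq hval)
  rcases min_le_iff.mp hkey with h|h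
  · exact Or.inl (le_antisymm h hF)
  · exact Or.inr (le_antisymm h hG)

lemma min_vT_coords (p : Place k) (P : Option (RatFunc k)) :
    min (placeValT p (coords P).1) (placeValT p (coords P).2)
      = ((min (placeVal p (coords P).1) (placeVal p (coords P).2) : ℤ) : WithTop ℤ) := by
  cases P with
  | none =>
    simp only [coords]
    rw [vT_one p, vT_zero p, placeVal_one, placeVal_zero]
    simp
  | some x =>
    by_cases hx : x = 0
    · subst hx
      simp only [coords]
      rw [vT_one p, vT_zero p, placeVal_one, placeVal_zero]
      simp
    · simp only [coords]
      rw [vT_one p, placeVal_one, vT_eq p hx]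
      norm_cast

lemma logDist_eq_of_rep (p : Place k) {P Q : Option (RatFunc k)} {ρ ρ' u v u' v' : RatFunc k}
    (hρ : ρ ≠ 0) (hρ' : ρ' ≠ 0)
    (hu : u = ρ * (coords P).1) (hv : v = ρ * (coords P).2)
    (hu' : u' = ρ' * (coords Q).1) (hv' : v' = ρ' * (coords Q).2)
    (hnu : 0 ≤ placeValT p u) (hnv : 0 ≤ placeValT p v)
    (hm : placeValT p u = 0 ∨ placeValT p v = 0)
    (hnu' : 0 ≤ placeValT p u') (hnv' : 0 ≤ placeValT p v')
    (hm' : placeValT p u' = 0 ∨ placeValT p v' = 0) :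
    logDist p P Q = placeValT p (u * v' - u' * v) := by
  have hmin : ∀ (z w : RatFunc k), 0 ≤ placeValT p z → 0 ≤ placeValT p w →
      (placeValT p z = 0 ∨ placeValT p w = 0) → min (placeValT p z) (placeValT p w) = 0 := by
    intro z w hz hw h
    rcases h with h|h
    · rw [h]; exact min_eq_left hw
    · rw [h]; exact min_eq_right hz
  have hρval : (placeVal p ρ : WithTop ℤ)
      + ((min (placeVal p (coords P).1) (placeVal p (coords P).2) : ℤ) : WithTop ℤ) = 0 := by
    have h0 : min (placeValT p u) (placeValT p v) = 0 := hmin u v hnu hnv hm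
    rw [hu, hv, vT_mul, vT_mul, min_add_add_left, min_vT_coords p P, vT_eq p hρ] at h0
    exact h0
  have hρ'val : (placeVal p ρ' : WithTop ℤ)
      + ((min (placeVal p (coords Q).1) (placeVal p (coords Q).2) : ℤ) : WithTop ℤ) = 0 := by
    have h0 : min (placeValT p u') (placeValT p v') = 0 := hmin u' v' hnu' hnv' hm'
    rw [hu', hv', vT_mul, vT_mul, min_add_add_left, min_vT_coords p Q, vT_eq p hρ'] at h0
    exact h0
  have hcross : u * v' - u' * v
      = (ρ * ρ') * ((coords P).1 * (coords Q).2 - (coords Q).1 * (coords P).2) := by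
    rw [hu, hv, hu', hv']; ring
  set m1 := min (placeVal p (coords P).1) (placeVal p (coords P).2) with hm1
  set m2 := min (placeVal p (coords Q).1) (placeVal p (coords Q).2) with hm2
  rw [logDist, hcross, vT_mul, vT_mul, vT_eq p hρ, vT_eq p hρ']
  rw [← WithTop.coe_add] at hρval hρ'val
  have e1 : placeVal p ρ + m1 = 0 := by exact_mod_cast hρval
  have e2 : placeVal p ρ' + m2 = 0 := by exact_mod_cast hρ'val
  have e1' : placeVal p ρ = - m1 := by omega
  have e2' : placeVal p ρ' = - m2 := by omega
  rw [e1', e2', show (- m1 - m2 : ℤ) = (- m1) + (- m2) by ring, WithTop.coe_add]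
  abel

end CanciAux
end
section
open Polynomial
variable {k : Type*} [Field k]
namespace CanciAux

lemma exists_rep (p : Place k) (P : Option (RatFunc k)) :
    ∃ ρ u v : RatFunc k, ρ ≠ 0 ∧ u = ρ * (coords P).1 ∧ v = ρ * (coords P).2 ∧
      0 ≤ placeValT p u ∧ 0 ≤ placeValT p v ∧
      (placeValT p u = 0 ∨ placeValT p v = 0) := by
  cases P with
  | none =>
    refine ⟨1, 1, 0, one_ne_zero, by simp [coords], by simp [coords], ?_, ?_, Or.inl (vT_one p)⟩
    · rw [vT_one p]
    · rw [vT_zero p]; exact le_top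
  | some x =>
    by_cases hx : 0 ≤ placeValT p x
    · exact ⟨1, x, 1, one_ne_zero, by simp [coords], by simp [coords], hx, le_of_eq (vT_one p).symm,
        Or.inr (vT_one p)⟩
    · have hx0 : x ≠ 0 := by
        intro h; rw [h, vT_zero p] at hx; exact hx le_top
      have hneg : placeVal p x < 0 := by
        rw [vT_eq p hx0] at hx
        by_contra h
        exact hx (by exact_mod_cast not_lt.mp h)
      refine ⟨x⁻¹, 1, x⁻¹, inv_ne_zero hx0, by simp [coords, hx0], by simp [coords], ?_, ?_, Or.inl (vT_one p)⟩
      · rw [vT_one p]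
      · rw [vT_eq p (inv_ne_zero hx0), placeVal_inv p hx0]
        exact_mod_cast le_of_lt (by omega : (0:ℤ) < - placeVal p x)

lemma logDist_symm (p : Place k) (P Q : Option (RatFunc k)) :
    logDist p P Q = logDist p Q P := by
  rw [logDist, logDist,
    show (coords P).1 * (coords Q).2 - (coords Q).1 * (coords P).2
      = -((coords Q).1 * (coords P).2 - (coords P).1 * (coords Q).2) by ring,
    vT_neg]
  congr 1
  rw [show (- min (placeVal p (coords P).1) (placeVal p (coords P).2)
      - min (placeVal p (coords Q).1) (placeVal p (coords Q).2) : ℤ)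
    = - min (placeVal p (coords Q).1) (placeVal p (coords Q).2)
      - min (placeVal p (coords P).1) (placeVal p (coords P).2) by ring]

lemma logDist_triangle (p : Place k) (P1 P2 P3 : Option (RatFunc k)) :
    min (logDist p P1 P2) (logDist p P2 P3) ≤ logDist p P1 P3 := by
  obtain ⟨ρ1, u1, v1, hρ1, hu1, hv1, hnu1, hnv1, hm1⟩ := exists_rep p P1
  obtain ⟨ρ2, u2, v2, hρ2, hu2, hv2, hnu2, hnv2, hm2⟩ := exists_rep p P2
  obtain ⟨ρ3, u3, v3, hρ3, hu3, hv3, hnu3, hnv3, hm3⟩ := exists_rep p P3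
  rw [logDist_eq_of_rep p hρ1 hρ2 hu1 hv1 hu2 hv2 hnu1 hnv1 hm1 hnu2 hnv2 hm2,
    logDist_eq_of_rep p hρ2 hρ3 hu2 hv2 hu3 hv3 hnu2 hnv2 hm2 hnu3 hnv3 hm3,
    logDist_eq_of_rep p hρ1 hρ3 hu1 hv1 hu3 hv3 hnu1 hnv1 hm1 hnu3 hnv3 hm3]
  rcases hm2 with h2|h2
  · have hid : u2 * (u1 * v3 - u3 * v1)
        = u3 * (u1 * v2 - u2 * v1) + u1 * (u2 * v3 - u3 * v2) := by ring
    have hv : placeValT p (u1 * v3 - u3 * v1)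
        = placeValT p (u2 * (u1 * v3 - u3 * v1)) := by
      rw [vT_mul, h2, zero_add]
    rw [hv, hid]
    refine le_trans ?_ (min_le_vT_add p _ _)
    refine le_min ?_ ?_
    · rw [vT_mul]
      exact le_trans (min_le_left _ _) (le_add_of_nonneg_left hnu3)
    · rw [vT_mul]
      exact le_trans (min_le_right _ _) (le_add_of_nonneg_left hnu1)
  · have hid : v2 * (u1 * v3 - u3 * v1)
        = v3 * (u1 * v2 - u2 * v1) + v1 * (u2 * v3 - u3 * v2) := by ring
    have hv : placeValT p (u1 * v3 - u3 * v1)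
        = placeValT p (v2 * (u1 * v3 - u3 * v1)) := by
      rw [vT_mul, h2, zero_add]
    rw [hv, hid]
    refine le_trans ?_ (min_le_vT_add p _ _)
    refine le_min ?_ ?_
    · rw [vT_mul]
      exact le_trans (min_le_left _ _) (le_add_of_nonneg_left hnv3)
    · rw [vT_mul]
      exact le_trans (min_le_right _ _) (le_add_of_nonneg_left hnv1)

/-- The pair of homogeneous evaluations represents the image point under `ratApply`. -/
lemma hEval_rep {f g : Polynomial (RatFunc k)} {d : ℕ} (hd : 1 ≤ d)
    (hfg : IsCoprime f g) (hdeg : max f.natDegree g.natDegree = d)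
    {c : RatFunc k} (hc : c ≠ 0) (P : Option (RatFunc k)) {ρ u v : RatFunc k}
    (hρ : ρ ≠ 0) (hu : u = ρ * (coords P).1) (hv : v = ρ * (coords P).2) :
    ∃ σ : RatFunc k, σ ≠ 0 ∧
      hEval (Polynomial.C c * f) d u v = σ * (coords (ratApply f g d P)).1 ∧
      hEval (Polynomial.C c * g) d u v = σ * (coords (ratApply f g d P)).2 := by
  have hdf : (Polynomial.C c * f).natDegree ≤ d := by
    rcases eq_or_ne f 0 with h|h
    · simp [h]
    · rw [Polynomial.natDegree_C_mul hc]
      exact le_trans (le_max_left _ _) (le_of_eq hdeg)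
  have hdg : (Polynomial.C c * g).natDegree ≤ d := by
    rcases eq_or_ne g 0 with h|h
    · simp [h]
    · rw [Polynomial.natDegree_C_mul hc]
      exact le_trans (le_max_right _ _) (le_of_eq hdeg)
  cases P with
  | some x =>
    have hu' : u = ρ * x := by rw [hu]; rfl
    have hv' : v = ρ * 1 := by rw [hv]; rfl
    have hF : hEval (Polynomial.C c * f) d u v = ρ^d * (c * f.eval x) := by
      rw [hu', hv', hEval_smul, hEval_eval hdf, Polynomial.eval_mul, Polynomial.eval_C]
    have hG : hEval (Polynomial.C c * g) d u v = ρ^d * (c * g.eval x) := by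
      rw [hu', hv', hEval_smul, hEval_eval hdg, Polynomial.eval_mul, Polynomial.eval_C]
    by_cases hgx : g.eval x = 0
    · have happ : ratApply f g d (some x) = none := by simp [ratApply, hgx]
      have hfx : f.eval x ≠ 0 := by
        obtain ⟨a, b, hab⟩ := hfg
        intro h0
        have := congrArg (Polynomial.eval x) hab
        simp [h0, hgx] at this
      refine ⟨ρ^d * (c * f.eval x), mul_ne_zero (pow_ne_zero _ hρ) (mul_ne_zero hc hfx), ?_, ?_⟩
      · rw [happ, hF]; simp [coords]
      · rw [happ, hG, hgx]; simp [coords]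
    · have happ : ratApply f g d (some x) = some (f.eval x / g.eval x) := by
        simp [ratApply, hgx]
      refine ⟨ρ^d * (c * g.eval x), ?_, ?_, ?_⟩
      · exact mul_ne_zero (pow_ne_zero _ hρ) (mul_ne_zero hc hgx)
      · rw [happ, hF]
        simp only [coords]
        field_simp
      · rw [happ, hG]; simp [coords]
  | none =>
    have hu' : u = ρ * 1 := by rw [hu]; rfl
    have hv' : v = ρ * 0 := by rw [hv]; rfl
    have hF : hEval (Polynomial.C c * f) d u v = ρ^d * (c * f.coeff d) := by
      rw [hu', hv', hEval_smul, hEval_inf, Polynomial.coeff_C_mul]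
    have hG : hEval (Polynomial.C c * g) d u v = ρ^d * (c * g.coeff d) := by
      rw [hu', hv', hEval_smul, hEval_inf, Polynomial.coeff_C_mul]
    by_cases hgd : g.coeff d = 0
    · have happ : ratApply f g d none = none := by simp [ratApply, hgd]
      have hfd : f.coeff d ≠ 0 := by
        have hgdeg : g.natDegree ≠ d := by
          intro h
          rcases eq_or_ne g 0 with h0|h0
          · rw [h0] at h; simp at h; omega
          · apply Polynomial.leadingCoeff_ne_zero.mpr h0
            rw [Polynomial.leadingCoeff, h]
            exact hgd
        have hfdeg : f.natDegree = d := by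
          rcases max_cases f.natDegree g.natDegree with ⟨h1, h2⟩|⟨h1, h2⟩ <;> omega
        have hf0 : f ≠ 0 := by
          intro h0; rw [h0] at hfdeg; simp at hfdeg; omega
        rw [← hfdeg]
        exact Polynomial.leadingCoeff_ne_zero.mpr hf0
      refine ⟨ρ^d * (c * f.coeff d), mul_ne_zero (pow_ne_zero _ hρ) (mul_ne_zero hc hfd), ?_, ?_⟩
      · rw [happ, hF]; simp [coords]
      · rw [happ, hG, hgd]; simp [coords]
    · have happ : ratApply f g d none = some (f.coeff d / g.coeff d) := by
        simp [ratApply, hgd]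
      refine ⟨ρ^d * (c * g.coeff d), ?_, ?_, ?_⟩
      · exact mul_ne_zero (pow_ne_zero _ hρ) (mul_ne_zero hc hgd)
      · rw [happ, hF]
        simp only [coords]
        field_simp
      · rw [happ, hG]; simp [coords]

/-- Monotonicity of the logarithmic distance under a map with good reduction at `p`. -/
lemma logDist_le_ratApply (p : Place k) {f g : Polynomial (RatFunc k)} {d : ℕ} (hd : 1 ≤ d)
    (hfg : IsCoprime f g) (hdeg : max f.natDegree g.natDegree = d)
    {c : RatFunc k} (hc : c ≠ 0)
    (hc1 : ∀ n, 0 ≤ placeValT p ((Polynomial.C c * f).coeff n))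
    (hc2 : ∀ n, 0 ≤ placeValT p ((Polynomial.C c * g).coeff n))
    (hres : placeValT p (hResultant d (Polynomial.C c * f) (Polynomial.C c * g)) = 0)
    (P Q : Option (RatFunc k)) :
    logDist p P Q ≤ logDist p (ratApply f g d P) (ratApply f g d Q) := by
  obtain ⟨ρ, u, v, hρ, hu, hv, hnu, hnv, hm⟩ := exists_rep p P
  obtain ⟨ρ', u', v', hρ', hu', hv', hnu', hnv', hm'⟩ := exists_rep p Q
  obtain ⟨σ, hσ, hU1, hU2⟩ := hEval_rep hd hfg hdeg hc P hρ hu hv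
  obtain ⟨σ', hσ', hU1', hU2'⟩ := hEval_rep hd hfg hdeg hc Q hρ' hu' hv'
  obtain ⟨hFn, hGn, hFGm⟩ := hEval_pair_normalized p hd hc1 hc2 hres hnu hnv hm
  obtain ⟨hFn', hGn', hFGm'⟩ := hEval_pair_normalized p hd hc1 hc2 hres hnu' hnv' hm'
  rw [logDist_eq_of_rep p hρ hρ' hu hv hu' hv' hnu hnv hm hnu' hnv' hm',
    logDist_eq_of_rep p hσ hσ' hU1 hU2 hU1' hU2' hFn hGn hFGm hFn' hGn' hFGm']
  exact vT_cross_hEval p d hc1 hc2 hnu hnv hnu' hnv'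

end CanciAux
end

theorem logDist_tail_orbit {k : Type*} [Field k] [IsAlgClosed k] [CharZero k]
    (S : Finset (Place k)) (s : ℕ) (hS : S.Nonempty) (hcard : S.card = s)
    (d : ℕ) (f g : Polynomial (RatFunc k)) (hfg : IsCoprime f g)
    (hdeg : max f.natDegree g.natDegree = d)
    (hgood : HasSimpleGoodReductionOutside S f g d)
    (m : ℕ) (Q : ℕ → Option (RatFunc k))
    (hQ0 : Q 0 = some 0)
    (hfix : ratApply f g d (Q 0) = Q 0)
    (hmap : ∀ i, 1 ≤ i → i ≤ m - 1 → ratApply f g d (Q i) = Q (i - 1)) :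
    ∀ a b : ℕ, 0 < a → a < b → b ≤ m - 1 → ∀ p ∉ S,
      logDist p (Q b) (Q a) = logDist p (Q b) (Q 0) ∧
      logDist p (Q b) (Q 0) ≤ logDist p (Q a) (Q 0) := by
  intro a b ha hab hbm p hp
  by_cases hd0 : d = 0
  · -- degenerate constant-map case
    subst hd0
    have hfC : f = Polynomial.C (f.coeff 0) :=
      Polynomial.eq_C_of_natDegree_le_zero
        (le_trans (le_max_left f.natDegree g.natDegree) (le_of_eq hdeg))
    have hgC : g = Polynomial.C (g.coeff 0) :=
      Polynomial.eq_C_of_natDegree_le_zero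
        (le_trans (le_max_right f.natDegree g.natDegree) (le_of_eq hdeg))
    obtain ⟨cf0, hf0⟩ : ∃ z, f = Polynomial.C z := ⟨f.coeff 0, hfC⟩
    obtain ⟨cg0, hg0⟩ : ∃ z, g = Polynomial.C z := ⟨g.coeff 0, hgC⟩
    subst hf0; subst hg0
    have happ : ∀ P, ratApply (Polynomial.C cf0) (Polynomial.C cg0) 0 P = some 0 := by
      intro P
      have h1 : ratApply (Polynomial.C cf0) (Polynomial.C cg0) 0 P
          = ratApply (Polynomial.C cf0) (Polynomial.C cg0) 0 (Q 0) := by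
        rw [hQ0]
        cases P with
        | none =>
          simp only [ratApply]
          by_cases hcg : cg0 = 0
          · rw [if_pos (by simp [hcg] : (Polynomial.C cg0).coeff 0 = 0),
              if_pos (by simp [hcg] : Polynomial.eval (0:RatFunc k) (Polynomial.C cg0) = 0)]
          · rw [if_neg (by simp [hcg] : ¬ (Polynomial.C cg0).coeff 0 = 0),
              if_neg (by simp [hcg] : ¬ Polynomial.eval (0:RatFunc k) (Polynomial.C cg0) = 0)]
            simp
        | some x =>
          simp only [ratApply]
          by_cases hcg : cg0 = 0
          · rw [if_pos (by simp [hcg] : Polynomial.eval x (Polynomial.C cg0) = 0),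
              if_pos (by simp [hcg] : Polynomial.eval (0:RatFunc k) (Polynomial.C cg0) = 0)]
          · rw [if_neg (by simp [hcg] : ¬ Polynomial.eval x (Polynomial.C cg0) = 0),
              if_neg (by simp [hcg] : ¬ Polynomial.eval (0:RatFunc k) (Polynomial.C cg0) = 0)]
            simp
      rw [h1, hfix, hQ0]
    have hQa : Q a = some 0 := by
      have h2 := hmap (a+1) (by omega) (by omega)
      rw [happ] at h2
      have e : a + 1 - 1 = a := by omega
      rw [e] at h2
      exact h2.symm
    constructor
    · rw [hQa, hQ0]
    · rw [hQa, hQ0]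
      have htop : logDist p (some (0 : RatFunc k)) (some 0) = ⊤ := by
        rw [logDist, sub_self, CanciAux.vT_zero]
        exact top_add _
      rw [htop]
      exact le_top
  · -- main case d ≥ 1
    have hd1 : 1 ≤ d := by omega
    obtain ⟨c, hc0, hpair, hresS⟩ := hgood
    have hmono : ∀ P R, logDist p P R ≤ logDist p (ratApply f g d P) (ratApply f g d R) :=
      fun P R => CanciAux.logDist_le_ratApply p hd1 hfg hdeg hc0
        (fun n => hpair.1 n p hp) (fun n => hpair.2.1 n p hp) (hresS p hp) P R
    have hstep : ∀ n, 1 ≤ n → n ≤ m-1 →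
        logDist p (Q n) (Q 0) ≤ logDist p (Q (n-1)) (Q 0) := by
      intro n h1 h2
      have h := hmono (Q n) (Q 0)
      rwa [hmap n h1 h2, hfix] at h
    have hzeromono : ∀ i j : ℕ, i ≤ j → j ≤ m-1 →
        logDist p (Q j) (Q 0) ≤ logDist p (Q i) (Q 0) := by
      intro i j hij
      induction j, hij using Nat.le_induction with
      | base => intro _; exact le_refl _
      | succ n hn IH =>
        intro hjm
        have h1 := hstep (n+1) (by omega) hjm
        have h2 : n + 1 - 1 = n := by omega
        rw [h2] at h1
        exact le_trans h1 (IH (by omega))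
    have hpairmono : ∀ (j x y : ℕ), j ≤ y → y ≤ x → x ≤ m-1 →
        logDist p (Q x) (Q y) ≤ logDist p (Q (x-j)) (Q (y-j)) := by
      intro j
      induction j with
      | zero => intro x y _ _ _; simp
      | succ n IHn =>
        intro x y hjy hyx hxm
        refine le_trans (IHn x y (by omega) hyx hxm) ?_
        have h1 := hmono (Q (x-n)) (Q (y-n))
        rw [hmap (x-n) (by omega) (by omega), hmap (y-n) (by omega) (by omega)] at h1
        have e1 : x - n - 1 = x - (n+1) := by omega
        have e2 : y - n - 1 = y - (n+1) := by omega
        rw [e1, e2] at h1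
        exact h1
    have main : ∀ b' : ℕ, ∀ a' : ℕ, 0 < a' → a' < b' → b' ≤ m-1 →
        logDist p (Q b') (Q a') = logDist p (Q b') (Q 0) := by
      intro b'
      induction b' using Nat.strong_induction_on with
      | _ b' IH =>
        intro a' ha' hab' hbm'
        have hba0 : logDist p (Q b') (Q 0) ≤ logDist p (Q a') (Q 0) :=
          hzeromono a' b' (le_of_lt hab') hbm'
        have hge : logDist p (Q b') (Q 0) ≤ logDist p (Q b') (Q a') := by
          have htri := CanciAux.logDist_triangle p (Q b') (Q 0) (Q a')
          have h0a : logDist p (Q b') (Q 0) ≤ logDist p (Q 0) (Q a') := by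
            rw [CanciAux.logDist_symm p (Q 0) (Q a')]
            exact hba0
          exact le_trans (le_min (le_refl _) h0a) htri
        rcases eq_or_lt_of_le hge with heq|hlt
        · exact heq.symm
        · exfalso
          have haeq : logDist p (Q a') (Q 0) = logDist p (Q b') (Q 0) := by
            refine le_antisymm ?_ hba0
            by_contra hcon
            push_neg at hcon
            have htri := CanciAux.logDist_triangle p (Q b') (Q a') (Q 0)
            rcases min_le_iff.mp htri with h|h
            · exact absurd h (not_le.mpr hlt)
            · exact absurd h (not_le.mpr hcon)
          have hupper : ∀ j, a' ≤ j → j ≤ m-1 →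
              logDist p (Q j) (Q 0) ≤ logDist p (Q b') (Q 0) := by
            intro j h1 h2
            exact le_trans (hzeromono a' j h1 h2) (le_of_eq haeq)
          have hE : ∀ n : ℕ, n ≤ a' →
              logDist p (Q b') (Q 0) < logDist p (Q (n + (b'-a'))) (Q n) := by
            intro n hn
            have h1 := hpairmono (a' - n) b' a' (by omega) (le_of_lt hab') hbm'
            have e1 : b' - (a' - n) = n + (b'-a') := by omega
            have e2 : a' - (a' - n) = n := by omega
            rw [e1, e2] at h1
            exact lt_of_lt_of_le hlt h1
          have hF : ∀ n : ℕ, n < a' →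
              logDist p (Q b') (Q 0) < logDist p (Q (n + (b'-a'))) (Q 0) := by
            intro n hn
            rcases Nat.eq_zero_or_pos n with h0|h0
            · subst h0
              simpa using hE 0 (by omega)
            · have hIH := IH (n + (b'-a')) (by omega) n h0 (by omega) (by omega)
              exact hIH ▸ hE n (by omega)
          have hcontra := hupper ((a'-1) + (b'-a')) (by omega) (by omega)
          exact absurd (lt_of_lt_of_le (hF (a'-1) (by omega)) hcontra) (lt_irrefl _)
    constructor
    · exact main b a ha hab hbm
    · exact hzeromono a b (le_of_lt hab) hbm
end
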